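/- Let M be a singular tournament matrix of order n that maximizes C_3 over singular tournament matrices of order n. If M has a strongly connected component of order 1, then M is obtained by adding a source or a sink to a regular or almost regular tournament of order n-1. -/
import Mathlib


open scoped Classical

/-- A tournament matrix: a (0,1)-matrix with `M + M.transpose = J - I`. -/
def IsTournament {ι : Type} [Fintype ι] [DecidableEq ι] (M : Matrix ι ι ℤ) : Prop :=
  (∀ i j, M i j = 0 ∨ M i j = 1) ∧
    M + M.transpose = Matrix.of (fun i j => if i = j then 0 else 1)

/-- The score (out-degree) of vertex `i`. -/
def score {ι : Type} [Fintype ι] (M : Matrix ι ι ℤ) (i : ι) : ℕ := (∑ j, M i j).toNat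

/-- The number of directed 3-cycles: ordered triples `i→j→k→i`, divided by 3. -/
noncomputable def C3 {ι : Type} [Fintype ι] [DecidableEq ι] (M : Matrix ι ι ℤ) : ℕ :=
  (Finset.univ.filter (fun p : ι × ι × ι =>
    M p.1 p.2.1 = 1 ∧ M p.2.1 p.2.2 = 1 ∧ M p.2.2 p.1 = 1)).card / 3

/-- Vertices `i` and `j` are strongly connected. -/
def SConn {ι : Type} [Fintype ι] (M : Matrix ι ι ℤ) (i j : ι) : Prop :=
  Relation.ReflTransGen (fun a b => M a b = 1) i j ∧
    Relation.ReflTransGen (fun a b => M a b = 1) j i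

/-- The strongly connected components (as vertex sets). -/
noncomputable def sccs {ι : Type} [Fintype ι] [DecidableEq ι] (M : Matrix ι ι ℤ) :
    Finset (Finset ι) :=
  Finset.univ.image (fun i => Finset.univ.filter (fun j => SConn M i j))

/-- The principal submatrix on a vertex set `V`. -/
def subm {ι : Type} [Fintype ι] [DecidableEq ι] (M : Matrix ι ι ℤ) (V : Finset ι) :
    Matrix {x // x ∈ V} {x // x ∈ V} ℤ :=
  M.submatrix Subtype.val Subtype.val

/-- A regular tournament: all scores equal. -/
def TRegular {ι : Type} [Fintype ι] (M : Matrix ι ι ℤ) : Prop :=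
  ∀ i j, score M i = score M j

/-- An almost regular tournament: scores differ by at most 1. -/
def TAlmostRegular {ι : Type} [Fintype ι] (M : Matrix ι ι ℤ) : Prop :=
  ∀ i j, score M i ≤ score M j + 1

/-- An upset tournament: a tournament on at least 3 vertices whose score vector is
`(1,1,2,3,…,n-3,n-2,n-2)`. -/
def IsUpset {ι : Type} [Fintype ι] [DecidableEq ι] (M : Matrix ι ι ℤ) : Prop :=
  IsTournament M ∧ 3 ≤ Fintype.card ι ∧
    Finset.univ.val.map (score M) =
      1 ::ₘ (Fintype.card ι - 2) ::ₘ (Multiset.range (Fintype.card ι - 2)).map (· + 1)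

namespace Aux17

open Finset

variable {n : ℕ}

lemma sum01_card {ι : Type} [Fintype ι] (f : ι → ℤ) (h01 : ∀ x, f x = 0 ∨ f x = 1) :
    (∑ x, f x) = ((Finset.univ.filter (fun x => f x = 1)).card : ℤ) := by
  rw [Finset.card_filter]
  push_cast
  refine Finset.sum_congr rfl fun x _ => ?_
  rcases h01 x with h | h <;> simp [h]

variable {X : Matrix (Fin n) (Fin n) ℤ}

lemma rel (hX : IsTournament X) (x y : Fin n) :
    X x y + X y x = if x = y then 0 else 1 := by
  have h := congrFun (congrFun hX.2 x) y
  simpa [Matrix.add_apply, Matrix.transpose_apply] using h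

lemma diag (hX : IsTournament X) (x : Fin n) : X x x = 0 := by
  have := rel hX x x
  simp at this
  linarith

lemma prod_zero (hX : IsTournament X) (x y : Fin n) : X x y * X y x = 0 := by
  rcases hX.1 x y with h | h
  · simp [h]
  · rcases eq_or_ne x y with rfl | hxy
    · rw [diag hX]; ring
    · have := rel hX x y
      rw [if_neg hxy] at this
      have : X y x = 0 := by linarith
      simp [this]

lemma entry_sq (hX : IsTournament X) (x y : Fin n) : X x y * X x y = X x y := by
  rcases hX.1 x y with h | h <;> simp [h]

lemma sum_e (x : Fin n) : (∑ y : Fin n, if x = y then (0:ℤ) else 1) = (n : ℤ) - 1 := by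
  have h : ∀ y : Fin n, (if x = y then (0:ℤ) else 1) = 1 - (if x = y then 1 else 0) := by
    intro y; split_ifs <;> ring
  rw [Finset.sum_congr rfl fun y _ => h y, Finset.sum_sub_distrib, Finset.sum_const,
    Finset.sum_ite_eq Finset.univ x (fun _ => (1:ℤ))]
  simp

lemma sum_e' (x : Fin n) : (∑ y : Fin n, if y = x then (0:ℤ) else 1) = (n : ℤ) - 1 := by
  rw [← sum_e x]
  exact Finset.sum_congr rfl fun y _ => by simp [eq_comm]

lemma sum_E (hX : IsTournament X) :
    2 * (∑ x : Fin n, ∑ y : Fin n, X x y) = (n:ℤ)^2 - n := by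
  have h1 : (∑ x : Fin n, ∑ y : Fin n, X x y) + (∑ x : Fin n, ∑ y : Fin n, X x y)
      = ∑ x : Fin n, ∑ y : Fin n, (X x y + X y x) := by
    have hsw : (∑ x : Fin n, ∑ y : Fin n, X y x) = ∑ x : Fin n, ∑ y : Fin n, X x y :=
      Finset.sum_comm
    have hsplit : (∑ x : Fin n, ∑ y : Fin n, (X x y + X y x))
        = (∑ x : Fin n, ∑ y : Fin n, X x y) + (∑ x : Fin n, ∑ y : Fin n, X y x) := by
      rw [← Finset.sum_add_distrib]
      exact Finset.sum_congr rfl fun x _ => Finset.sum_add_distrib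
    rw [hsplit, hsw]
  have h2 : (∑ x : Fin n, ∑ y : Fin n, (X x y + X y x)) = (n:ℤ) * ((n:ℤ) - 1) := by
    rw [Finset.sum_congr rfl fun x _ => Finset.sum_congr rfl fun y _ => rel hX x y]
    rw [Finset.sum_congr rfl fun x (_ : x ∈ Finset.univ) => sum_e x, Finset.sum_const]
    simp [mul_comm]
  have := h1.trans h2
  ring_nf
  ring_nf at this
  linarith

lemma hcol (hX : IsTournament X) (y : Fin n) :
    (∑ x, X x y) = (n : ℤ) - 1 - ∑ z, X y z := by
  have h : ∀ x : Fin n, X x y = (if x = y then (0:ℤ) else 1) - X y x := by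
    intro x
    have := rel hX x y
    linarith
  rw [Finset.sum_congr rfl fun x _ => h x, Finset.sum_sub_distrib, sum_e']

lemma key_identity (hX : IsTournament X) :
    2 * (∑ x : Fin n, ∑ y : Fin n, ∑ z : Fin n, X x y * X y z * X z x)
      = (2 * (n : ℤ) - 1) * (∑ x : Fin n, ∑ y : Fin n, X x y)
        - 3 * ∑ x : Fin n, (∑ y : Fin n, X x y) ^ 2 := by
  -- step 1: split the triple product using X z x = e z x - X x z
  have step1 : ∀ x y : Fin n, (∑ z, X x y * X y z * X z x)
      = X x y * (∑ z, X y z) - X x y * X y x - (∑ z, X x y * X y z * X x z) := by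
    intro x y
    have hterm : ∀ z : Fin n, X x y * X y z * X z x
        = X x y * X y z - (if z = x then X x y * X y z else 0) - X x y * X y z * X x z := by
      intro z
      have hz : X z x = (if z = x then (0:ℤ) else 1) - X x z := by
        have := rel hX z x; linarith
      rw [hz]
      split_ifs with h <;> ring
    rw [Finset.sum_congr rfl fun z _ => hterm z, Finset.sum_sub_distrib,
      Finset.sum_sub_distrib, ← Finset.mul_sum,
      Finset.sum_ite_eq' Finset.univ x (fun z => X x y * X y z)]
    simp
  have hT : (∑ x : Fin n, ∑ y : Fin n, ∑ z : Fin n, X x y * X y z * X z x)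
      = (∑ y : Fin n, ((n:ℤ) - 1 - ∑ z, X y z) * (∑ z, X y z))
        - (∑ x : Fin n, ∑ y : Fin n, ∑ z : Fin n, X x y * X y z * X x z) := by
    rw [Finset.sum_congr rfl fun x _ => Finset.sum_congr rfl fun y _ => step1 x y]
    have hsplit : (∑ x : Fin n, ∑ y : Fin n,
        (X x y * (∑ z, X y z) - X x y * X y x - (∑ z, X x y * X y z * X x z)))
        = (∑ x : Fin n, ∑ y : Fin n, X x y * (∑ z, X y z))
          - (∑ x : Fin n, ∑ y : Fin n, X x y * X y x)
          - (∑ x : Fin n, ∑ y : Fin n, ∑ z, X x y * X y z * X x z) := by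
      rw [← Finset.sum_sub_distrib, ← Finset.sum_sub_distrib]
      refine Finset.sum_congr rfl fun x _ => ?_
      rw [← Finset.sum_sub_distrib, ← Finset.sum_sub_distrib]
    rw [hsplit]
    have hz2 : (∑ x : Fin n, ∑ y : Fin n, X x y * X y x) = 0 :=
      Finset.sum_eq_zero fun x _ => Finset.sum_eq_zero fun y _ => prod_zero hX x y
    have hz1 : (∑ x : Fin n, ∑ y : Fin n, X x y * (∑ z, X y z))
        = ∑ y : Fin n, ((n:ℤ) - 1 - ∑ z, X y z) * (∑ z, X y z) := by
      rw [Finset.sum_comm]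
      refine Finset.sum_congr rfl fun y _ => ?_
      rw [← Finset.sum_mul, hcol hX y]
    rw [hz1, hz2]
    ring
  -- step 2: 2 * S3 = ∑ (σ x ^ 2 - σ x)
  have hS3sym : (∑ x : Fin n, ∑ y : Fin n, ∑ z : Fin n, X x y * X y z * X x z)
      = ∑ x : Fin n, ∑ y : Fin n, ∑ z : Fin n, X x z * X z y * X x y :=
    Finset.sum_congr rfl fun x _ => Finset.sum_comm
  have h2S3 : 2 * (∑ x : Fin n, ∑ y : Fin n, ∑ z : Fin n, X x y * X y z * X x z)
      = ∑ x : Fin n, ((∑ y, X x y) * (∑ y, X x y) - (∑ y, X x y)) := by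
    have hcomb : (∑ x : Fin n, ∑ y : Fin n, ∑ z : Fin n, X x y * X y z * X x z)
        + (∑ x : Fin n, ∑ y : Fin n, ∑ z : Fin n, X x z * X z y * X x y)
        = ∑ x : Fin n, ∑ y : Fin n, ∑ z : Fin n,
            (X x y * X x z * (if y = z then (0:ℤ) else 1)) := by
      rw [← Finset.sum_add_distrib]
      refine Finset.sum_congr rfl fun x _ => ?_
      rw [← Finset.sum_add_distrib]
      refine Finset.sum_congr rfl fun y _ => ?_
      rw [← Finset.sum_add_distrib]
      refine Finset.sum_congr rfl fun z _ => ?_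
      rw [← rel hX y z]
      ring
    have hinner : ∀ x y : Fin n,
        (∑ z : Fin n, X x y * X x z * (if y = z then (0:ℤ) else 1))
        = X x y * (∑ z, X x z) - X x y := by
      intro x y
      have hterm : ∀ z : Fin n, X x y * X x z * (if y = z then (0:ℤ) else 1)
          = X x y * X x z - (if y = z then X x y * X x z else 0) := by
        intro z; split_ifs <;> ring
      rw [Finset.sum_congr rfl fun z _ => hterm z, Finset.sum_sub_distrib, ← Finset.mul_sum,
        Finset.sum_ite_eq Finset.univ y (fun z => X x y * X x z)]
      simp [entry_sq hX]
    have hmid : ∀ x : Fin n,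
        (∑ y : Fin n, (X x y * (∑ z, X x z) - X x y))
        = (∑ y, X x y) * (∑ y, X x y) - (∑ y, X x y) := by
      intro x
      rw [Finset.sum_sub_distrib, ← Finset.sum_mul]
    rw [two_mul]
    nth_rewrite 2 [hS3sym]
    rw [hcomb]
    rw [Finset.sum_congr rfl fun x _ => Finset.sum_congr rfl fun y _ => hinner x y]
    exact Finset.sum_congr rfl fun x _ => hmid x
  -- combine
  have hfin : 2 * (∑ y : Fin n, ((n:ℤ) - 1 - ∑ z, X y z) * (∑ z, X y z))
      - (∑ x : Fin n, ((∑ y, X x y) * (∑ y, X x y) - (∑ y, X x y)))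
      = (2 * (n : ℤ) - 1) * (∑ x : Fin n, ∑ y : Fin n, X x y)
        - 3 * ∑ x : Fin n, (∑ y : Fin n, X x y) ^ 2 := by
    rw [Finset.mul_sum, Finset.mul_sum, Finset.mul_sum, ← Finset.sum_sub_distrib,
      ← Finset.sum_sub_distrib]
    refine Finset.sum_congr rfl fun x _ => ?_
    ring
  calc 2 * (∑ x : Fin n, ∑ y : Fin n, ∑ z : Fin n, X x y * X y z * X z x)
      = 2 * (∑ y : Fin n, ((n:ℤ) - 1 - ∑ z, X y z) * (∑ z, X y z))
        - 2 * (∑ x : Fin n, ∑ y : Fin n, ∑ z : Fin n, X x y * X y z * X x z) := by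
        rw [hT]; ring
    _ = 2 * (∑ y : Fin n, ((n:ℤ) - 1 - ∑ z, X y z) * (∑ z, X y z))
        - (∑ x : Fin n, ((∑ y, X x y) * (∑ y, X x y) - (∑ y, X x y))) := by rw [h2S3]
    _ = _ := hfin

lemma card_C3_filter (hX : IsTournament X) :
    ((Finset.univ.filter (fun p : Fin n × Fin n × Fin n =>
      X p.1 p.2.1 = 1 ∧ X p.2.1 p.2.2 = 1 ∧ X p.2.2 p.1 = 1)).card : ℤ)
     = ∑ x : Fin n, ∑ y : Fin n, ∑ z : Fin n, X x y * X y z * X z x := by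
  rw [Finset.card_filter]
  push_cast
  rw [Fintype.sum_prod_type]
  refine Finset.sum_congr rfl fun x _ => ?_
  rw [Fintype.sum_prod_type]
  refine Finset.sum_congr rfl fun y _ => ?_
  refine Finset.sum_congr rfl fun z _ => ?_
  rcases hX.1 x y with h1 | h1 <;> rcases hX.1 y z with h2 | h2 <;>
    rcases hX.1 z x with h3 | h3 <;> simp [h1, h2, h3]

lemma six_dvd (m : ℕ) : ∃ q : ℤ, (2*(m:ℤ) - 1) * ((m:ℤ)^2 - m) = 6 * q := by
  induction m with
  | zero => exact ⟨0, by norm_num⟩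
  | succ k ih =>
      obtain ⟨q, hq⟩ := ih
      refine ⟨q + k^2, ?_⟩
      push_cast
      push_cast at hq
      linear_combination hq

lemma S2_compare (M N : Matrix (Fin n) (Fin n) ℤ) (hM : IsTournament M) (hN : IsTournament N)
    (hC : C3 N ≤ C3 M) :
    (∑ x : Fin n, (∑ y : Fin n, M x y)^2) ≤ ∑ x : Fin n, (∑ y : Fin n, N x y)^2 := by
  obtain ⟨q, hq⟩ := six_dvd n
  have h4 : ∀ (X : Matrix (Fin n) (Fin n) ℤ), IsTournament X →
      4 * (((Finset.univ.filter (fun p : Fin n × Fin n × Fin n =>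
        X p.1 p.2.1 = 1 ∧ X p.2.1 p.2.2 = 1 ∧ X p.2.2 p.1 = 1)).card : ℤ))
      = 6 * q - 6 * ∑ x : Fin n, (∑ y : Fin n, X x y) ^ 2 := by
    intro X hX
    rw [card_C3_filter hX]
    have hk := key_identity hX
    have hE := sum_E hX
    linear_combination 2 * hk + (2*(n:ℤ) - 1) * hE + hq
  have hdvd : ∀ (X : Matrix (Fin n) (Fin n) ℤ), IsTournament X →
      3 ∣ (Finset.univ.filter (fun p : Fin n × Fin n × Fin n =>
        X p.1 p.2.1 = 1 ∧ X p.2.1 p.2.2 = 1 ∧ X p.2.2 p.1 = 1)).card := by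
    intro X hX
    have h := h4 X hX
    have h3 : (3:ℤ) ∣ ((Finset.univ.filter (fun p : Fin n × Fin n × Fin n =>
        X p.1 p.2.1 = 1 ∧ X p.2.1 p.2.2 = 1 ∧ X p.2.2 p.1 = 1)).card : ℤ) := by
      have hd1 : (3:ℤ) ∣ 4 * (((Finset.univ.filter (fun p : Fin n × Fin n × Fin n =>
          X p.1 p.2.1 = 1 ∧ X p.2.1 p.2.2 = 1 ∧ X p.2.2 p.1 = 1)).card : ℤ)) := by
        rw [h]; exact ⟨2*q - 2*∑ x : Fin n, (∑ y : Fin n, X x y) ^ 2, by ring⟩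
      have hd2 : (3:ℤ) ∣ 3 * (((Finset.univ.filter (fun p : Fin n × Fin n × Fin n =>
          X p.1 p.2.1 = 1 ∧ X p.2.1 p.2.2 = 1 ∧ X p.2.2 p.1 = 1)).card : ℤ)) :=
        Dvd.intro _ rfl
      have hdd := dvd_sub hd1 hd2
      have hr : 4 * (((Finset.univ.filter (fun p : Fin n × Fin n × Fin n =>
          X p.1 p.2.1 = 1 ∧ X p.2.1 p.2.2 = 1 ∧ X p.2.2 p.1 = 1)).card : ℤ))
          - 3 * (((Finset.univ.filter (fun p : Fin n × Fin n × Fin n =>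
          X p.1 p.2.1 = 1 ∧ X p.2.1 p.2.2 = 1 ∧ X p.2.2 p.1 = 1)).card : ℤ))
          = (((Finset.univ.filter (fun p : Fin n × Fin n × Fin n =>
          X p.1 p.2.1 = 1 ∧ X p.2.1 p.2.2 = 1 ∧ X p.2.2 p.1 = 1)).card : ℤ)) := by ring
      rwa [hr] at hdd
    exact_mod_cast h3
  obtain ⟨m, hm⟩ := hdvd M hM
  obtain ⟨m', hm'⟩ := hdvd N hN
  have hCm : C3 M = m := by unfold C3; rw [hm]; omega
  have hCm' : C3 N = m' := by unfold C3; rw [hm']; omega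
  have hmm : m' ≤ m := by rw [hCm, hCm'] at hC; exact hC
  have h4M := h4 M hM
  have h4N := h4 N hN
  rw [hm] at h4M
  rw [hm'] at h4N
  have : (m' : ℤ) ≤ m := by exact_mod_cast hmm
  push_cast at h4M h4N
  linarith

def NT (n : ℕ) : Matrix (Fin n) (Fin n) ℤ := fun x y =>
  if x = y then 0 else if x.val = 0 then 1 else if y.val = 0 then 0
  else if (x.val < y.val) ↔ ((x.val + y.val) % 2 = 1) then 1 else 0

lemma NT_tour : IsTournament (NT n) := by
  constructor
  · intro x y; unfold NT; split_ifs <;> simp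
  · ext x y
    simp only [Matrix.add_apply, Matrix.transpose_apply, Matrix.of_apply]
    unfold NT
    rcases eq_or_ne x y with rfl | hxy
    · simp
    · have hv : x.val ≠ y.val := fun h => hxy (Fin.ext h)
      rw [if_neg hxy, if_neg (Ne.symm hxy), if_neg hxy]
      split_ifs <;> omega

lemma NT_det (hn : 0 < n) : (NT n).det = 0 := by
  apply Matrix.det_eq_zero_of_column_eq_zero ⟨0, hn⟩
  intro i
  unfold NT
  rcases eq_or_ne i (⟨0, hn⟩ : Fin n) with rfl | hne
  · simp
  · have h0 : ((⟨0, hn⟩ : Fin n) : ℕ) = 0 := rfl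
    rw [if_neg hne]
    by_cases hi : (i : ℕ) = 0
    · exact absurd (Fin.ext (by simp [hi, h0])) hne
    · rw [if_neg hi, if_pos h0]

-- counting lemmas over ℕ
lemma cardA (s m : ℕ) :
    ((Finset.range m).filter (fun y => s < y ∧ (s + y) % 2 = 1)).card = (m - s)/2 := by
  have himg : (Finset.range m).filter (fun y => s < y ∧ (s + y) % 2 = 1)
      = (Finset.range ((m - s)/2)).image (fun j => s + 2*j + 1) := by
    ext y
    simp only [Finset.mem_filter, Finset.mem_range, Finset.mem_image]
    constructor
    · rintro ⟨h1, h2, h3⟩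
      exact ⟨(y - s - 1)/2, by omega, by omega⟩
    · rintro ⟨j, hj, rfl⟩
      omega
  rw [himg, Finset.card_image_of_injective _ (fun a b h => by omega), Finset.card_range]

lemma cardB (s m : ℕ) (hsm : s ≤ m) :
    ((Finset.range m).filter (fun y => 0 < y ∧ y < s ∧ (s + y) % 2 = 0)).card = (s - 1)/2 := by
  have himg : (Finset.range m).filter (fun y => 0 < y ∧ y < s ∧ (s + y) % 2 = 0)
      = (Finset.range ((s - 1)/2)).image (fun j => s - 2*(j+1)) := by
    ext y
    simp only [Finset.mem_filter, Finset.mem_range, Finset.mem_image]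
    constructor
    · rintro ⟨h1, h2, h3, h4⟩
      exact ⟨(s - y)/2 - 1, by omega, by omega⟩
    · rintro ⟨j, hj, rfl⟩
      omega
  rw [himg, Finset.card_image_of_injOn, Finset.card_range]
  intro a ha b hb h
  simp only [Finset.coe_range, Set.mem_Iio] at ha hb
  have h' : s - 2*(a+1) = s - 2*(b+1) := h
  omega

lemma card_filter_fin (m : ℕ) (Q : ℕ → Prop) [DecidablePred Q] :
    (Finset.univ.filter (fun y : Fin m => Q y.val)).card = ((Finset.range m).filter Q).card := by
  refine Finset.card_bij (fun y _ => y.val) ?_ ?_ ?_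
  · intro a ha
    rw [Finset.mem_filter] at ha
    rw [Finset.mem_filter, Finset.mem_range]
    exact ⟨a.isLt, ha.2⟩
  · intro a ha b hb h
    exact Fin.ext h
  · intro b hb
    simp only [Finset.mem_filter, Finset.mem_range] at hb
    exact ⟨⟨b, hb.1⟩, by simp [hb.2], rfl⟩

lemma NT_score0 (hn : 0 < n) : (∑ y, NT n ⟨0, hn⟩ y) = (n : ℤ) - 1 := by
  rw [sum01_card _ (fun y => NT_tour.1 ⟨0, hn⟩ y)]
  have hset : (Finset.univ.filter (fun y => NT n ⟨0, hn⟩ y = 1))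
      = Finset.univ.erase ⟨0, hn⟩ := by
    ext y
    simp only [Finset.mem_filter, Finset.mem_univ, true_and, Finset.mem_erase, and_true]
    unfold NT
    rcases eq_or_ne (⟨0, hn⟩ : Fin n) y with rfl | hne
    · simp
    · rw [if_neg hne, if_pos rfl]
      simp [hne.symm]
  rw [hset, Finset.card_erase_of_mem (Finset.mem_univ _), Finset.card_univ, Fintype.card_fin]
  have : (1:ℕ) ≤ n := hn
  push_cast [Nat.cast_sub this]
  ring

lemma NT_score_rest (x : Fin n) (hx : x.val ≠ 0) :
    (∑ y, NT n x y) = ((n - x.val)/2 + (x.val - 1)/2 : ℕ) := by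
  rw [sum01_card _ (fun y => NT_tour.1 x y)]
  congr 1
  have hchar : ∀ y : Fin n, NT n x y = 1 ↔
      ((x.val < y.val ∧ (x.val + y.val) % 2 = 1) ∨
       (0 < y.val ∧ y.val < x.val ∧ (x.val + y.val) % 2 = 0)) := by
    intro y
    unfold NT
    rcases eq_or_ne x y with rfl | hne
    · simp
    · have hvne : x.val ≠ y.val := fun h => hne (Fin.ext h)
      rw [if_neg hne, if_neg hx]
      by_cases hy0 : y.val = 0
      · rw [if_pos hy0]
        constructor
        · intro h; exact absurd h (by norm_num)
        · intro h; omega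
      · rw [if_neg hy0]
        by_cases hp : (x.val < y.val) ↔ ((x.val + y.val) % 2 = 1)
        · rw [if_pos hp]
          exact ⟨fun _ => by omega, fun _ => rfl⟩
        · rw [if_neg hp]
          refine ⟨fun h => by norm_num at h, fun h => ?_⟩
          exfalso
          omega
  have h1 : (Finset.univ.filter (fun y : Fin n => NT n x y = 1))
      = Finset.univ.filter (fun y : Fin n =>
          (x.val < y.val ∧ (x.val + y.val) % 2 = 1) ∨
          (0 < y.val ∧ y.val < x.val ∧ (x.val + y.val) % 2 = 0)) := by
    apply Finset.filter_congr
    intro y _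
    exact hchar y
  rw [h1]
  have h2 := card_filter_fin n (fun t =>
      (x.val < t ∧ (x.val + t) % 2 = 1) ∨ (0 < t ∧ t < x.val ∧ (x.val + t) % 2 = 0))
  rw [h2]
  rw [Finset.filter_or, Finset.card_union_of_disjoint]
  · rw [cardA, cardB x.val n (le_of_lt x.isLt)]
  · rw [Finset.disjoint_left]
    intro t ht1 ht2
    simp only [Finset.mem_filter] at ht1 ht2
    omega

lemma sum_quad {ι : Type} (s : Finset ι) (f : ι → ℤ) (p q : ℤ) :
    ∑ x ∈ s, (f x - p) * (f x - q)
      = ∑ x ∈ s, (f x)^2 - (p + q) * ∑ x ∈ s, f x + (s.card : ℤ) * (p * q) := by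
  have h : ∀ x ∈ s, (f x - p)*(f x - q) = (f x)^2 - (p+q)*(f x) + p*q := fun x _ => by ring
  rw [Finset.sum_congr rfl h, Finset.sum_add_distrib, Finset.sum_sub_distrib,
    ← Finset.mul_sum, Finset.sum_const, nsmul_eq_mul]

lemma quad_nn (x z : ℤ) : 0 ≤ (x - z) * (x - (z+1)) := by
  rcases le_or_gt x z with h | h
  · have h2 : 0 ≤ (z - x) * (z + 1 - x) := mul_nonneg (by linarith) (by linarith)
    nlinarith [h2]
  · exact mul_nonneg (by linarith) (by linarith)

lemma subm_score (hX : IsTournament X) (w : Fin n)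
    (i : {x // x ∈ Finset.univ.erase w}) :
    score (subm X (Finset.univ.erase w)) i = ((∑ j, X i.1 j) - X i.1 w).toNat := by
  unfold score subm
  have h1 : (∑ j : {x // x ∈ Finset.univ.erase w}, X.submatrix Subtype.val Subtype.val i j)
      = ∑ j ∈ Finset.univ.erase w, X i.1 j := by
    rw [← Finset.sum_coe_sort (Finset.univ.erase w) (fun t => X i.1 t)]
    rfl
  rw [h1, Finset.sum_erase_eq_sub (Finset.mem_univ w)]

lemma conclude_source (hX : IsTournament X) (w : Fin n) (c : ℕ)
    (hσw : (∑ j, X w j) = (n:ℤ) - 1)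
    (hrest : ∀ i, i ≠ w → (∑ j, X i j) = (c:ℤ) ∨ (∑ j, X i j) = (c:ℤ) + 1) :
    ((∀ j, j ≠ w → X w j = 1) ∨ (∀ j, X w j = 0)) ∧
      (TRegular (subm X (Finset.univ.erase w)) ∨
        TAlmostRegular (subm X (Finset.univ.erase w))) := by
  have hn : 0 < n := w.pos
  have hcard : (Finset.univ.erase w).card = n - 1 := by
    rw [Finset.card_erase_of_mem (Finset.mem_univ _), Finset.card_univ, Fintype.card_fin]
  have hall : ∀ j, j ≠ w → X w j = 1 := by
    intro j hj
    have h1 : (∑ j ∈ Finset.univ.erase w, X w j) = (n:ℤ) - 1 := by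
      rw [Finset.sum_erase_eq_sub (Finset.mem_univ w), diag hX, hσw, sub_zero]
    have h2 : (∑ j ∈ Finset.univ.erase w, (1 - X w j)) = 0 := by
      rw [Finset.sum_sub_distrib, h1, Finset.sum_const, hcard, nsmul_eq_mul, mul_one]
      have : (1:ℕ) ≤ n := hn
      push_cast [Nat.cast_sub this]
      ring
    have h3 := (Finset.sum_eq_zero_iff_of_nonneg (fun x _ => by
      rcases hX.1 w x with h | h <;> simp [h])).mp h2 j (by simp [hj])
    linarith
  refine ⟨Or.inl hall, Or.inr ?_⟩
  intro i j
  have hiw : i.1 ≠ w := (Finset.mem_erase.mp i.2).1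
  have hjw : j.1 ≠ w := (Finset.mem_erase.mp j.2).1
  have hXw : ∀ u : Fin n, u ≠ w → X u w = 0 := by
    intro u hu
    have h := rel hX w u
    rw [if_neg (Ne.symm hu), hall u hu] at h
    linarith
  rw [subm_score hX w i, subm_score hX w j, hXw i.1 hiw, hXw j.1 hjw]
  rcases hrest i.1 hiw with h1 | h1 <;> rcases hrest j.1 hjw with h2 | h2 <;>
    rw [h1, h2] <;> omega

lemma conclude_sink (hX : IsTournament X) (w : Fin n) (c : ℕ)
    (hσw : (∑ j, X w j) = 0)
    (hrest : ∀ i, i ≠ w → (∑ j, X i j) = (c:ℤ) + 1 ∨ (∑ j, X i j) = (c:ℤ) + 2) :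
    ((∀ j, j ≠ w → X w j = 1) ∨ (∀ j, X w j = 0)) ∧
      (TRegular (subm X (Finset.univ.erase w)) ∨
        TAlmostRegular (subm X (Finset.univ.erase w))) := by
  have hall : ∀ j, X w j = 0 := by
    intro j
    exact (Finset.sum_eq_zero_iff_of_nonneg (fun x _ => by
      rcases hX.1 w x with h | h <;> simp [h])).mp hσw j (Finset.mem_univ j)
  refine ⟨Or.inr hall, Or.inr ?_⟩
  intro i j
  have hiw : i.1 ≠ w := (Finset.mem_erase.mp i.2).1
  have hjw : j.1 ≠ w := (Finset.mem_erase.mp j.2).1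
  have hXw : ∀ u : Fin n, u ≠ w → X u w = 1 := by
    intro u hu
    have h := rel hX u w
    rw [if_neg hu, hall u] at h
    linarith
  rw [subm_score hX w i, subm_score hX w j, hXw i.1 hiw, hXw j.1 hjw]
  rcases hrest i.1 hiw with h1 | h1 <;> rcases hrest j.1 hjw with h2 | h2 <;>
    rw [h1, h2] <;> omega

end Aux17

set_option maxHeartbeats 1000000 in
open Aux17 Finset in
theorem stmt17 (n : ℕ) (M : Matrix (Fin n) (Fin n) ℤ)
    (hM : IsTournament M) (hdet : M.det = 0)
    (hmax : ∀ N : Matrix (Fin n) (Fin n) ℤ, IsTournament N → N.det = 0 →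
      C3 N ≤ C3 M)
    (h1 : ∃ V ∈ sccs M, V.card = 1) :
    ∃ v : Fin n,
      ((∀ j, j ≠ v → M v j = 1) ∨ (∀ j, M v j = 0)) ∧
      (TRegular (subm M (Finset.univ.erase v)) ∨
        TAlmostRegular (subm M (Finset.univ.erase v))) := by
  classical
  obtain ⟨V, hV, hVcard⟩ := h1
  simp only [sccs, Finset.mem_image] at hV
  obtain ⟨i0, -, hi0⟩ := hV
  obtain ⟨v, hvV⟩ := Finset.card_eq_one.mp hVcard
  have hi0V : i0 ∈ V := by
    rw [← hi0]
    simp only [Finset.mem_filter]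
    exact ⟨Finset.mem_univ _, ⟨Relation.ReflTransGen.refl, Relation.ReflTransGen.refl⟩⟩
  have hi0v : i0 = v := by rw [hvV] at hi0V; simpa using hi0V
  have hnot : ∀ j, j ≠ v → ¬ SConn M v j := by
    intro j hj hS
    have hjV : j ∈ V := by
      rw [← hi0, Finset.mem_filter]
      exact ⟨Finset.mem_univ _, hi0v ▸ hS⟩
    rw [hvV] at hjV
    exact hj (by simpa using hjV)
  have hn : 0 < n := v.pos
  set U := Finset.univ.filter (fun j => M j v = 1) with hU
  set D := Finset.univ.filter (fun j => M v j = 1) with hD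
  have hMvv := diag hM v
  have hmemU : ∀ j, j ∈ U ↔ M j v = 1 := by intro j; rw [hU]; simp
  have hmemD : ∀ j, j ∈ D ↔ M v j = 1 := by intro j; rw [hD]; simp
  have hvU : v ∉ U := fun h => by rw [hmemU] at h; rw [hMvv] at h; norm_num at h
  have hvD : v ∉ D := fun h => by rw [hmemD] at h; rw [hMvv] at h; norm_num at h
  have hUv : ∀ j ∈ U, j ≠ v := fun j hj he => hvU (he ▸ hj)
  have hDv : ∀ j ∈ D, j ≠ v := fun j hj he => hvD (he ▸ hj)
  have hUD : ∀ j, j ≠ v → j ∈ U ∨ j ∈ D := by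
    intro j hj
    rcases hM.1 j v with h | h
    · right; rw [hmemD]
      have hr := rel hM j v
      rw [if_neg hj, h] at hr
      linarith
    · left; rw [hmemU]; exact h
  have hdisj : Disjoint U D := by
    rw [Finset.disjoint_left]
    intro j hjU hjD
    have h1 := (hmemU j).mp hjU
    have h2 := (hmemD j).mp hjD
    have hr := rel hM j v
    rw [if_neg (hUv j hjU), h1, h2] at hr
    norm_num at hr
  have hunion : U ∪ D = Finset.univ.erase v := by
    ext j
    rw [Finset.mem_union, Finset.mem_erase]
    constructor
    · intro h
      rcases h with h | h
      · exact ⟨hUv j h, Finset.mem_univ _⟩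
      · exact ⟨hDv j h, Finset.mem_univ _⟩
    · rintro ⟨hjv, -⟩
      exact hUD j hjv
  have hcardUD : U.card + D.card = n - 1 := by
    rw [← Finset.card_union_of_disjoint hdisj, hunion,
      Finset.card_erase_of_mem (Finset.mem_univ v), Finset.card_univ, Fintype.card_fin]
  have hcross : ∀ u ∈ U, ∀ d ∈ D, M u d = 1 := by
    intro u hu d hd
    rcases hM.1 u d with h | h
    · exfalso
      have hud : u ≠ d := fun he => (Finset.disjoint_left.mp hdisj hu) (he ▸ hd)
      have hr := rel hM u d
      rw [if_neg hud, h] at hr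
      have hMdu : M d u = 1 := by linarith
      exact hnot u (hUv u hu)
        ⟨Relation.ReflTransGen.tail (Relation.ReflTransGen.single ((hmemD d).mp hd)) hMdu,
         Relation.ReflTransGen.single ((hmemU u).mp hu)⟩
    · exact h
  -- score facts
  have hσv : (∑ j, M v j) = (D.card : ℤ) := by
    rw [sum01_card _ (fun j => hM.1 v j), hD]
  have hσu : ∀ u ∈ U, (D.card : ℤ) + 1 ≤ ∑ j, M u j := by
    intro u hu
    have hnn : ∀ i ∈ Finset.univ, i ∉ insert v D → 0 ≤ M u i := fun i _ _ => by
      rcases hM.1 u i with h | h <;> simp [h]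
    have hle := Finset.sum_le_sum_of_subset_of_nonneg (Finset.subset_univ (insert v D)) hnn
    rw [Finset.sum_insert hvD] at hle
    have hDsum : (∑ d ∈ D, M u d) = (D.card : ℤ) := by
      rw [Finset.sum_congr rfl (fun d hd => hcross u hu d hd), Finset.sum_const,
        nsmul_eq_mul, mul_one]
    rw [(hmemU u).mp hu, hDsum] at hle
    linarith
  have hrow0 : ∀ d ∈ D, (∑ j, M d j) = ∑ j ∈ D, M d j := by
    intro d hd
    symm
    apply Finset.sum_subset (Finset.subset_univ D)
    intro j _ hjD
    rcases eq_or_ne j v with heq | hjv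
    · rw [heq]
      have hr := rel hM v d
      rw [if_neg (Ne.symm (hDv d hd)), (hmemD d).mp hd] at hr
      linarith
    · have hjU : j ∈ U := (hUD j hjv).resolve_right hjD
      have h1 := hcross j hjU d hd
      have hjd : j ≠ d := fun he => hjD (he ▸ hd)
      have hr := rel hM j d
      rw [if_neg hjd, h1] at hr
      linarith
  have hσd_le : ∀ d ∈ D, (∑ j, M d j) ≤ (D.card : ℤ) - 1 := by
    intro d hd
    rw [hrow0 d hd]
    have h1 : (∑ j ∈ D, M d j) = ∑ j ∈ D.erase d, M d j := by
      rw [← Finset.add_sum_erase D _ hd, diag hM, zero_add]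
    rw [h1]
    have h2 : (∑ j ∈ D.erase d, M d j) ≤ (D.erase d).card • (1:ℤ) :=
      Finset.sum_le_card_nsmul _ _ _ (fun j _ => by rcases hM.1 d j with h | h <;> simp [h])
    rw [Finset.card_erase_of_mem hd, nsmul_eq_mul, mul_one] at h2
    have hb1 : 1 ≤ D.card := Finset.card_pos.mpr ⟨d, hd⟩
    have hcast : ((D.card - 1 : ℕ) : ℤ) = (D.card : ℤ) - 1 := by omega
    rw [hcast] at h2
    exact h2
  have h2D : 2 * (∑ d ∈ D, ∑ j, M d j) = (D.card:ℤ)^2 - D.card := by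
    rw [Finset.sum_congr rfl hrow0]
    have hdbl : (∑ d ∈ D, ∑ j ∈ D, (M d j + M j d)) = (D.card:ℤ) * ((D.card:ℤ) - 1) := by
      rw [Finset.sum_congr rfl (fun d hd => Finset.sum_congr rfl (fun j _ => rel hM d j))]
      have hin : ∀ d ∈ D, (∑ j ∈ D, if d = j then (0:ℤ) else 1) = (D.card : ℤ) - 1 := by
        intro d hd
        have h : ∀ j ∈ D, (if d = j then (0:ℤ) else 1) = 1 - (if d = j then 1 else 0) :=
          fun j _ => by split_ifs <;> ring
        rw [Finset.sum_congr rfl h, Finset.sum_sub_distrib, Finset.sum_const,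
          Finset.sum_ite_eq D d (fun _ => (1:ℤ)), if_pos hd, nsmul_eq_mul, mul_one]
      rw [Finset.sum_congr rfl hin, Finset.sum_const, nsmul_eq_mul]
    have hsplit : (∑ d ∈ D, ∑ j ∈ D, (M d j + M j d))
        = (∑ d ∈ D, ∑ j ∈ D, M d j) + (∑ d ∈ D, ∑ j ∈ D, M j d) := by
      rw [← Finset.sum_add_distrib]
      exact Finset.sum_congr rfl fun d _ => Finset.sum_add_distrib
    have hsw : (∑ d ∈ D, ∑ j ∈ D, M j d) = ∑ d ∈ D, ∑ j ∈ D, M d j := Finset.sum_comm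
    rw [hsplit, hsw] at hdbl
    linear_combination hdbl
  -- comparison with NT
  have hNt : IsTournament (NT n) := NT_tour
  have hS2 := S2_compare M (NT n) hM hNt (hmax (NT n) hNt (NT_det hn))
  set c : ℕ := (n - 2)/2 with hc
  have hNrest : ∀ x : Fin n, x ≠ ⟨0, hn⟩ →
      ((∑ y, NT n x y) = (c:ℤ) ∨ (∑ y, NT n x y) = (c:ℤ)+1) := by
    intro x hx
    have hxv : x.val ≠ 0 := fun h => hx (Fin.ext h)
    rw [NT_score_rest x hxv]
    have hlt : x.val < n := x.isLt
    have h01 : (n - x.val)/2 + (x.val - 1)/2 = c ∨ (n - x.val)/2 + (x.val - 1)/2 = c + 1 := by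
      rw [hc]; omega
    rcases h01 with h | h
    · left; rw [h]
    · right; rw [h]; push_cast; ring
  -- decompositions
  have hPdec : (∑ x, (∑ y, M x y)^2)
      = (∑ y, M v y)^2 + ((∑ u ∈ U, (∑ y, M u y)^2) + (∑ d ∈ D, (∑ y, M d y)^2)) := by
    rw [← Finset.sum_union hdisj, hunion]
    exact (Finset.add_sum_erase _ _ (Finset.mem_univ v)).symm
  have hEdec : (∑ x : Fin n, ∑ y, M x y)
      = (∑ y, M v y) + ((∑ u ∈ U, ∑ y, M u y) + (∑ d ∈ D, ∑ y, M d y)) := by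
    rw [← Finset.sum_union hdisj, hunion]
    exact (Finset.add_sum_erase _ _ (Finset.mem_univ v)).symm
  have hEM := sum_E hM
  have hEN := sum_E hNt
  have hQdec : (∑ x, (∑ y, NT n x y)^2)
      = (∑ y, NT n ⟨0, hn⟩ y)^2 + ∑ x ∈ Finset.univ.erase ⟨0, hn⟩, (∑ y, NT n x y)^2 :=
    (Finset.add_sum_erase _ _ (Finset.mem_univ _)).symm
  have hENdec : (∑ x : Fin n, ∑ y, NT n x y)
      = (∑ y, NT n ⟨0, hn⟩ y) + ∑ x ∈ Finset.univ.erase ⟨0, hn⟩, ∑ y, NT n x y :=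
    (Finset.add_sum_erase _ _ (Finset.mem_univ _)).symm
  have hσN0 := NT_score0 hn
  have hq := sum_quad (Finset.univ.erase (⟨0, hn⟩ : Fin n)) (fun x => ∑ y, NT n x y)
    (c:ℤ) ((c:ℤ)+1)
  have hzero : (∑ x ∈ Finset.univ.erase (⟨0, hn⟩ : Fin n),
      ((∑ y, NT n x y) - (c:ℤ)) * ((∑ y, NT n x y) - ((c:ℤ)+1))) = 0 :=
    Finset.sum_eq_zero (fun x hx => by
      rcases hNrest x (Finset.mem_erase.mp hx).1 with h | h <;> rw [h] <;> ring)
  rw [hzero] at hq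
  have hce : (((Finset.univ.erase (⟨0, hn⟩ : Fin n)).card : ℕ) : ℤ) = (n:ℤ) - 1 := by
    rw [Finset.card_erase_of_mem (Finset.mem_univ _), Finset.card_univ, Fintype.card_fin]
    omega
  rw [hce] at hq
  have hSR : (∑ x ∈ Finset.univ.erase (⟨0, hn⟩ : Fin n), ∑ y, NT n x y)
      = (∑ x : Fin n, ∑ y, M x y) - ((n:ℤ) - 1) := by
    linarith [hENdec, hσN0, hEN, hEM]
  have hQval : (∑ x, (∑ y, NT n x y)^2)
      = ((n:ℤ)-1)^2 + (2*(c:ℤ)+1)*((∑ x : Fin n, ∑ y, M x y) - ((n:ℤ)-1))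
        - ((n:ℤ)-1)*((c:ℤ)*((c:ℤ)+1)) := by
    linear_combination hQdec - hq + ((∑ y, NT n ⟨0, hn⟩ y) + ((n:ℤ)-1)) * hσN0
      + (2*(c:ℤ)+1) * hSR
  have hGUe := sum_quad U (fun u => ∑ y, M u y) ((c:ℤ)+1) ((c:ℤ)+2)
  have hGDe := sum_quad D (fun d => ∑ y, M d y) (c:ℤ) ((c:ℤ)+1)
  have hab : (U.card : ℤ) + (D.card : ℤ) = (n:ℤ) - 1 := by omega
  have hPQ : (∑ x, (∑ y, M x y)^2) - (∑ x, (∑ y, NT n x y)^2)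
      = (∑ u ∈ U, ((∑ y, M u y) - ((c:ℤ)+1)) * ((∑ y, M u y) - ((c:ℤ)+2)))
        + (∑ d ∈ D, ((∑ y, M d y) - (c:ℤ)) * ((∑ y, M d y) - ((c:ℤ)+1))) := by
    linear_combination hPdec - hGUe - hGDe - hQval
      + ((∑ y, M v y) + (D.card:ℤ) - (2*(c:ℤ)+3)) * hσv
      + hEM - (2*(c:ℤ)+3) * hEdec - h2D - (((c:ℤ)+1)*((c:ℤ)+2)) * hab
  have hGUnn : 0 ≤ ∑ u ∈ U, ((∑ y, M u y) - ((c:ℤ)+1)) * ((∑ y, M u y) - ((c:ℤ)+2)) :=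
    Finset.sum_nonneg fun u _ => by
      have h := quad_nn (∑ y, M u y) ((c:ℤ)+1)
      have he : ((c:ℤ)+1)+1 = (c:ℤ)+2 := by ring
      rwa [he] at h
  have hGDnn : 0 ≤ ∑ d ∈ D, ((∑ y, M d y) - (c:ℤ)) * ((∑ y, M d y) - ((c:ℤ)+1)) :=
    Finset.sum_nonneg fun d _ => quad_nn (∑ y, M d y) (c:ℤ)
  have hGU0 : (∑ u ∈ U, ((∑ y, M u y) - ((c:ℤ)+1)) * ((∑ y, M u y) - ((c:ℤ)+2))) = 0 := by
    linarith
  have hGD0 : (∑ d ∈ D, ((∑ y, M d y) - (c:ℤ)) * ((∑ y, M d y) - ((c:ℤ)+1))) = 0 := by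
    linarith
  have hU2 : ∀ u ∈ U, (∑ y, M u y) = (c:ℤ)+1 ∨ (∑ y, M u y) = (c:ℤ)+2 := by
    intro u hu
    have h := (Finset.sum_eq_zero_iff_of_nonneg (fun u _ => by
      have h := quad_nn (∑ y, M u y) ((c:ℤ)+1)
      have he : ((c:ℤ)+1)+1 = (c:ℤ)+2 := by ring
      rwa [he] at h)).mp hGU0 u hu
    rcases mul_eq_zero.mp h with h | h
    · left; linarith
    · right; linarith
  have hD2 : ∀ d ∈ D, (∑ y, M d y) = (c:ℤ) ∨ (∑ y, M d y) = (c:ℤ)+1 := by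
    intro d hd
    have h := (Finset.sum_eq_zero_iff_of_nonneg (fun d _ =>
      quad_nn (∑ y, M d y) (c:ℤ))).mp hGD0 d hd
    rcases mul_eq_zero.mp h with h | h
    · left; linarith
    · right; linarith
  -- case analysis
  rcases Finset.eq_empty_or_nonempty D with hDe | ⟨d0, hd0⟩
  · have hσv0 : (∑ j, M v j) = 0 := by rw [hσv, hDe]; simp
    have hrest : ∀ i, i ≠ v → (∑ j, M i j) = (c:ℤ)+1 ∨ (∑ j, M i j) = (c:ℤ)+2 := by
      intro i hi
      rcases hUD i hi with h | h
      · exact hU2 i h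
      · rw [hDe] at h; exact absurd h (Finset.notMem_empty i)
    exact ⟨v, conclude_sink hM v c hσv0 hrest⟩
  · rcases Finset.eq_empty_or_nonempty U with hUe | ⟨u0, hu0⟩
    · have hDcard : D.card = n - 1 := by
        have : U.card = 0 := by rw [hUe]; rfl
        omega
      have hσvn : (∑ j, M v j) = (n:ℤ) - 1 := by
        rw [hσv, hDcard]; omega
      have hrest : ∀ i, i ≠ v → (∑ j, M i j) = (c:ℤ) ∨ (∑ j, M i j) = (c:ℤ)+1 := by
        intro i hi
        rcases hUD i hi with h | h
        · rw [hUe] at h; exact absurd h (Finset.notMem_empty i)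
        · exact hD2 i h
      exact ⟨v, conclude_source hM v c hσvn hrest⟩
    · have hb1 : 1 ≤ D.card := Finset.card_pos.mpr ⟨d0, hd0⟩
      have ha1 : 1 ≤ U.card := Finset.card_pos.mpr ⟨u0, hu0⟩
      have f1 : (D.card:ℤ) ≤ (c:ℤ) + 1 := by
        rcases hU2 u0 hu0 with h | h <;> have := hσu u0 hu0 <;> linarith
      have f2 : (D.card:ℤ) * (c:ℤ) ≤ ∑ d ∈ D, ∑ y, M d y := by
        have h := Finset.card_nsmul_le_sum D (fun d => ∑ y, M d y) (c:ℤ)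
          (fun d hd => by rcases hD2 d hd with h | h <;> linarith)
        rwa [nsmul_eq_mul] at h
      have f3 : 2*(c:ℤ) + 1 ≤ (D.card:ℤ) := by
        by_contra hcon
        push_neg at hcon
        have hbpos : (0:ℤ) < (D.card:ℤ) := by exact_mod_cast hb1
        have h5 : 0 ≤ (D.card:ℤ)^2 - (D.card:ℤ) - 2*((D.card:ℤ)*(c:ℤ)) := by
          linarith [h2D, f2]
        have h7 : (D.card:ℤ) * ((D.card:ℤ) - 1 - 2*(c:ℤ)) ≤ (D.card:ℤ) * (-1) :=
          mul_le_mul_of_nonneg_left (by linarith) (le_of_lt hbpos)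
        have h6 : (D.card:ℤ) * ((D.card:ℤ) - 1 - 2*(c:ℤ))
            = (D.card:ℤ)^2 - (D.card:ℤ) - 2*((D.card:ℤ)*(c:ℤ)) := by ring
        linarith
      have hc0 : c = 0 := by omega
      have hbv : D.card = 1 := by omega
      have hn3 : n = 3 := by omega
      have hav : U.card = 1 := by omega
      obtain ⟨u1, hU1⟩ := Finset.card_eq_one.mp hav
      have hu0u1 : u0 = u1 := by rw [hU1] at hu0; simpa using hu0
      subst hu0u1
      have hcz : (c:ℤ) = 0 := by exact_mod_cast hc0
      have hbz : (D.card:ℤ) = 1 := by exact_mod_cast hbv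
      have hnz : (n:ℤ) = 3 := by exact_mod_cast hn3
      have hσu0 : (∑ y, M u0 y) = (n:ℤ) - 1 := by
        have h1 := hσu u0 hu0
        rcases hU2 u0 hu0 with h | h
        · linarith
        · linarith
      have hrest : ∀ i, i ≠ u0 → (∑ y, M i y) = (c:ℤ) ∨ (∑ y, M i y) = (c:ℤ)+1 := by
        intro i hi
        rcases eq_or_ne i v with heq | hiv
        · right; rw [heq, hσv, hbz, hcz]; norm_num
        · rcases hUD i hiv with h | h
          · rw [hU1] at h
            exact absurd (by simpa using h) hi
          · exact hD2 i h
      exact ⟨u0, conclude_source hM u0 c hσu0 hrest⟩
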